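/- With G as defined from Boltzmann probabilities and rewards R_{ij} satisfying 0 < R_{ij} < 2γ, every solution of the ODE q̇ = G(q) − q converges as t → ∞ to the unique fixed point q* of G. -/

import Mathlib

/-!
Writing the softmax weights through the logistic function `σ`, which is `1/4`-Lipschitz, each
coordinate of `G` is `R σ((qᵢ - qⱼ)/γ)`, so `G` is a contraction of ratio `max |R| / (2γ) < 1` for the
Euclidean norm. Along a solution of `q̇ = G q - q`, the function `eᵗ (q t - q*)` has derivative
`eᵗ (G (q t) - G q*)`, of norm at most `K ‖eᵗ (q t - q*)‖`; Grönwall's inequality then gives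
`‖q t - q*‖ ≤ e^{-(1-K)t} ‖q 0 - q*‖`.
-/

/-- The stationary map of the Q-learning dynamics. Coordinates:
`0 = A1`, `1 = A2`, `2 = B1`, `3 = B2`. -/
noncomputable def stationaryMap (γ RA1 RA2 RB1 RB2 : ℝ)
    (q : EuclideanSpace ℝ (Fin 4)) : EuclideanSpace ℝ (Fin 4) :=
  WithLp.toLp 2 ![RA1 * Real.exp (q 3 / γ) / (Real.exp (q 2 / γ) + Real.exp (q 3 / γ)),
    RA2 * Real.exp (q 2 / γ) / (Real.exp (q 2 / γ) + Real.exp (q 3 / γ)),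
    RB1 * Real.exp (q 1 / γ) / (Real.exp (q 0 / γ) + Real.exp (q 1 / γ)),
    RB2 * Real.exp (q 0 / γ) / (Real.exp (q 0 / γ) + Real.exp (q 1 / γ))]

open Real Filter Topology
open scoped NNReal

lemma Real.lipschitzWith_sigmoid : LipschitzWith 4⁻¹ sigmoid := by
  refine lipschitzWith_of_nnnorm_deriv_le (fun _ => differentiableAt_sigmoid) fun x => ?_
  have h0 := sigmoid_pos x
  have h1 := sigmoid_lt_one x
  rw [← NNReal.coe_le_coe, coe_nnnorm, deriv_sigmoid, norm_of_nonneg (by nlinarith)]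
  push_cast
  nlinarith [sq_nonneg (2 * sigmoid x - 1)]

lemma Real.exp_div_exp_add_exp (x y : ℝ) : exp x / (exp x + exp y) = sigmoid (x - y) := by
  rw [sigmoid_def, neg_sub, exp_sub]
  field_simp

lemma Real.exp_div_exp_add_exp' (x y : ℝ) : exp x / (exp y + exp x) = sigmoid (x - y) := by
  rw [add_comm, exp_div_exp_add_exp]

lemma sq_mul_sigmoid_sub_le {γ R K : ℝ} (hγ : 0 < γ) (hR : |R| ≤ 2 * γ * K) (a b c d : ℝ) :
    (R * sigmoid ((a - b) / γ) - R * sigmoid ((c - d) / γ)) ^ 2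
      ≤ K ^ 2 / 2 * ((a - c) ^ 2 + (b - d) ^ 2) := by
  have hK : 0 ≤ K := nonneg_of_mul_nonneg_right ((abs_nonneg R).trans hR) (by positivity)
  have hσ : |sigmoid ((a - b) / γ) - sigmoid ((c - d) / γ)| ≤ 4⁻¹ * (|a - c| + |b - d|) / γ :=
    calc _ ≤ 4⁻¹ * |(a - b) / γ - (c - d) / γ| := by
          simpa [Real.dist_eq] using lipschitzWith_sigmoid.dist_le_mul ((a - b) / γ) ((c - d) / γ)
      _ = 4⁻¹ * |(a - c) - (b - d)| / γ := by
          rw [← sub_div, abs_div, abs_of_pos hγ, mul_div_assoc]; ring_nf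
      _ ≤ _ := by gcongr; exact abs_sub _ _
  have hΔ : |R * sigmoid ((a - b) / γ) - R * sigmoid ((c - d) / γ)|
      ≤ K / 2 * (|a - c| + |b - d|) :=
    calc _ = |R| * |sigmoid ((a - b) / γ) - sigmoid ((c - d) / γ)| := by rw [← mul_sub, abs_mul]
      _ ≤ 2 * γ * K * (4⁻¹ * (|a - c| + |b - d|) / γ) := by gcongr
      _ = K / 2 * (|a - c| + |b - d|) := by field_simp; ring
  calc _ = |R * sigmoid ((a - b) / γ) - R * sigmoid ((c - d) / γ)| ^ 2 := (sq_abs _).symm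
    _ ≤ (K / 2 * (|a - c| + |b - d|)) ^ 2 := by gcongr
    _ ≤ K ^ 2 / 2 * (|a - c| ^ 2 + |b - d| ^ 2) := by
        nlinarith [sq_nonneg (|a - c| - |b - d|), sq_nonneg K]
    _ = _ := by rw [sq_abs, sq_abs]

lemma stationaryMap_eq_sigmoid (γ RA1 RA2 RB1 RB2 : ℝ) (q : EuclideanSpace ℝ (Fin 4)) :
    stationaryMap γ RA1 RA2 RB1 RB2 q = WithLp.toLp 2
      ![RA1 * sigmoid ((q 3 - q 2) / γ), RA2 * sigmoid ((q 2 - q 3) / γ),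
        RB1 * sigmoid ((q 1 - q 0) / γ), RB2 * sigmoid ((q 0 - q 1) / γ)] := by
  simp only [stationaryMap, mul_div_assoc, exp_div_exp_add_exp, exp_div_exp_add_exp', sub_div]

lemma lipschitzWith_stationaryMap {γ RA1 RA2 RB1 RB2 : ℝ} {K : ℝ≥0} (hγ : 0 < γ)
    (hA1 : |RA1| ≤ 2 * γ * K) (hA2 : |RA2| ≤ 2 * γ * K)
    (hB1 : |RB1| ≤ 2 * γ * K) (hB2 : |RB2| ≤ 2 * γ * K) :
    LipschitzWith K (stationaryMap γ RA1 RA2 RB1 RB2) := by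
  refine LipschitzWith.of_dist_le_mul fun x y => ?_
  rw [EuclideanSpace.dist_eq, EuclideanSpace.dist_eq, ← sqrt_sq K.coe_nonneg,
    ← sqrt_mul (sq_nonneg _)]
  refine sqrt_le_sqrt ?_
  simp only [Fin.sum_univ_four, stationaryMap_eq_sigmoid, Real.dist_eq, sq_abs, PiLp.toLp_apply,
    Matrix.cons_val_zero, Matrix.cons_val_one, Matrix.cons_val_two, Matrix.cons_val_three,
    Matrix.head_cons, Matrix.tail_cons]
  linarith [sq_mul_sigmoid_sub_le hγ hA1 (x 3) (x 2) (y 3) (y 2),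
    sq_mul_sigmoid_sub_le hγ hA2 (x 2) (x 3) (y 2) (y 3),
    sq_mul_sigmoid_sub_le hγ hB1 (x 1) (x 0) (y 1) (y 0),
    sq_mul_sigmoid_sub_le hγ hB2 (x 0) (x 1) (y 0) (y 1)]

lemma exists_contractingWith_stationaryMap {γ RA1 RA2 RB1 RB2 : ℝ} (hγ : 0 < γ)
    (hA1 : |RA1| < 2 * γ) (hA2 : |RA2| < 2 * γ) (hB1 : |RB1| < 2 * γ) (hB2 : |RB2| < 2 * γ) :
    ∃ K, ContractingWith K (stationaryMap γ RA1 RA2 RB1 RB2) := by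
  set Rmax := max (max |RA1| |RA2|) (max |RB1| |RB2|)
  let K : ℝ≥0 := ⟨Rmax / (2 * γ), by positivity⟩
  have hK : (K : ℝ) = Rmax / (2 * γ) := rfl
  have hR : ∀ R, R ≤ Rmax → R ≤ 2 * γ * K := fun R hR => by
    rwa [hK, mul_div_cancel₀ _ (by positivity)]
  refine ⟨K, ?_, lipschitzWith_stationaryMap hγ (hR _ ?_) (hR _ ?_) (hR _ ?_) (hR _ ?_)⟩
  · rw [← NNReal.coe_lt_coe, hK, NNReal.coe_one, div_lt_one (by positivity)]
    simp only [Rmax, max_lt_iff]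
    exact ⟨⟨hA1, hA2⟩, hB1, hB2⟩
  all_goals simp [Rmax]

section RelaxationFlow

variable {E : Type*} [NormedAddCommGroup E] [NormedSpace ℝ E] {G : E → E} {K : ℝ≥0} {x : E}
  {q : ℝ → E}

theorem norm_sub_le_of_hasDerivAt_eq_sub_self (hG : LipschitzWith K G) (hx : G x = x)
    (hq : ∀ t, 0 ≤ t → HasDerivAt q (G (q t) - q t) t) {t : ℝ} (ht : 0 ≤ t) :
    ‖q t - x‖ ≤ ‖q 0 - x‖ * exp (-((1 - K) * t)) := by
  set v : ℝ → E := fun s => exp s • (q s - x)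
  have hv : ∀ s, 0 ≤ s → HasDerivAt v (exp s • (G (q s) - G x)) s := fun s hs => by
    refine ((hasDerivAt_exp s).smul ((hq s hs).sub_const x)).congr_deriv ?_
    rw [hx, ← smul_add, sub_add_sub_cancel]
  have hv_norm : ∀ s, ‖v s‖ = exp s * ‖q s - x‖ := fun s => by
    rw [norm_smul, norm_of_nonneg (exp_pos s).le]
  have hv_growth : ∀ s, ‖exp s • (G (q s) - G x)‖ ≤ K * ‖v s‖ + 0 := fun s => by
    rw [add_zero, norm_smul, norm_of_nonneg (exp_pos s).le, hv_norm, mul_left_comm]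
    gcongr
    exact hG.norm_sub_le _ _
  have hgronwall := norm_le_gronwallBound_of_norm_deriv_right_le
    (fun s hs => (hv s hs.1).continuousAt.continuousWithinAt)
    (fun s hs => (hv s hs.1).hasDerivWithinAt) le_rfl (fun s _ => hv_growth s) t ⟨ht, le_rfl⟩
  rw [gronwallBound_ε0, sub_zero, hv_norm, hv_norm, exp_zero, one_mul] at hgronwall
  calc ‖q t - x‖ = exp (-t) * (exp t * ‖q t - x‖) := by
        rw [← mul_assoc, ← exp_add, neg_add_cancel, exp_zero, one_mul]
    _ ≤ exp (-t) * (‖q 0 - x‖ * exp (K * t)) := by gcongr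
    _ = ‖q 0 - x‖ * exp (-((1 - K) * t)) := by
        rw [mul_left_comm, ← exp_add]; ring_nf

theorem tendsto_of_hasDerivAt_eq_sub_self (hK : K < 1) (hG : LipschitzWith K G) (hx : G x = x)
    (hq : ∀ t, 0 ≤ t → HasDerivAt q (G (q t) - q t) t) : Tendsto q atTop (𝓝 x) := by
  have hrate : Tendsto (fun t : ℝ => (1 - K : ℝ) * t) atTop atTop :=
    tendsto_id.const_mul_atTop (sub_pos.2 (by exact_mod_cast hK))
  have hdecay : Tendsto (fun t => ‖q 0 - x‖ * exp (-((1 - K) * t))) atTop (𝓝 0) := by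
    simpa using (tendsto_exp_neg_atTop_nhds_zero.comp hrate).const_mul ‖q 0 - x‖
  rw [tendsto_iff_norm_sub_tendsto_zero]
  exact squeeze_zero' (.of_forall fun _ => norm_nonneg _)
    (eventually_atTop.2 ⟨0, fun t ht => norm_sub_le_of_hasDerivAt_eq_sub_self hG hx hq ht⟩) hdecay

end RelaxationFlow

theorem ode_converges_to_unique_fixed_point
    (γ RA1 RA2 RB1 RB2 : ℝ) (hγ : 0 < γ)
    (hA1 : 0 < RA1) (hA1' : RA1 < 2 * γ)
    (hA2 : 0 < RA2) (hA2' : RA2 < 2 * γ)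
    (hB1 : 0 < RB1) (hB1' : RB1 < 2 * γ)
    (hB2 : 0 < RB2) (hB2' : RB2 < 2 * γ)
    (q : ℝ → EuclideanSpace ℝ (Fin 4))
    (hq : ∀ t, HasDerivAt q (stationaryMap γ RA1 RA2 RB1 RB2 (q t) - q t) t) :
    ∃ qstar : EuclideanSpace ℝ (Fin 4),
      stationaryMap γ RA1 RA2 RB1 RB2 qstar = qstar ∧
      (∀ q' : EuclideanSpace ℝ (Fin 4),
        stationaryMap γ RA1 RA2 RB1 RB2 q' = q' → q' = qstar) ∧
      Filter.Tendsto q Filter.atTop (nhds qstar) := by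
  obtain ⟨K, hG⟩ := exists_contractingWith_stationaryMap hγ
    (abs_lt.2 ⟨by linarith, hA1'⟩) (abs_lt.2 ⟨by linarith, hA2'⟩)
    (abs_lt.2 ⟨by linarith, hB1'⟩) (abs_lt.2 ⟨by linarith, hB2'⟩)
  exact ⟨hG.fixedPoint, hG.fixedPoint_isFixedPt, fun _ => hG.fixedPoint_unique,
    tendsto_of_hasDerivAt_eq_sub_self hG.1 hG.2 hG.fixedPoint_isFixedPt fun t _ => hq t⟩
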